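/- Let f : [0,1] → ℝ be twice continuously differentiable with |f''(x)| ≤ C for all x, set b(n,k) = f(k/n) + C/(2n), and let X be hypergeometric with parameters (2n,k,n). Then b(2n,k) ≤ E[b(n,X)]. -/

import Mathlib

/-!
Since `|f''| ≤ C`, the function `f + C x² / 2` is convex, so Jensen's inequality gives
`f (E Y) ≤ E f(Y) + (C / 2) Var Y` for every random variable `Y` with values in `[0, 1]`.
For `Y = X / n` the first two factorial moments of the hypergeometric law give `E Y = k / (2n)`
and `Var Y = k (2n - k) / (4n² (2n - 1)) ≤ 1 / (4n)`, whence
`b(2n, k) = f(k / 2n) + C / (4n) ≤ E f(X / n) + C / (8n) + C / (4n) ≤ E b(n, X)`.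
-/

open Finset

namespace Nat

theorem sum_range_choose_mul_choose (k m n : ℕ) :
    ∑ i ∈ range (n + 1), k.choose i * m.choose (n - i) = (k + m).choose n := by
  rw [add_choose_eq, Finset.Nat.sum_antidiagonal_eq_sum_range_succ_mk]

/-- The factorial moments `E[X^(r)] = n^(r) k^(r) / N^(r)` of the hypergeometric law
(`n` draws from `N = k + m` items, `k` of them marked), with denominators cleared. -/
theorem sum_range_descFactorial_mul_choose_mul_choose (r k m n : ℕ) :
    (k + m).descFactorial r *
        ∑ i ∈ range (n + 1), i.descFactorial r * (k.choose i * m.choose (n - i)) =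
      n.descFactorial r * k.descFactorial r * (k + m).choose n := by
  induction r generalizing k n with
  | zero => simp [sum_range_choose_mul_choose]
  | succ r ih =>
    cases n with
    | zero => simp
    | succ n =>
      cases k with
      | zero => simp [sum_range_succ']
      | succ k =>
        have hshift : ∑ i ∈ range (n + 2), i.descFactorial (r + 1) *
              ((k + 1).choose i * m.choose (n + 1 - i)) =
            (k + 1) * ∑ i ∈ range (n + 1), i.descFactorial r * (k.choose i * m.choose (n - i)) := by
          rw [sum_range_succ', mul_sum]
          refine (add_eq_left.mpr (by simp)).trans (sum_congr rfl fun i _ => ?_)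
          rw [succ_descFactorial_succ, Nat.add_sub_add_right]
          calc _ = i.descFactorial r * m.choose (n - i) * ((k + 1).choose (i + 1) * (i + 1)) := by
                ring
            _ = _ := by rw [← add_one_mul_choose_eq]; ring
        rw [hshift, show k + 1 + m = k + m + 1 by ring, succ_descFactorial_succ,
          succ_descFactorial_succ, succ_descFactorial_succ]
        calc _ = (k + 1) * (k + m + 1) * ((k + m).descFactorial r * ∑ i ∈ range (n + 1),
              i.descFactorial r * (k.choose i * m.choose (n - i))) := by ring
          _ = (k + 1) * n.descFactorial r * k.descFactorial r *
                ((k + m + 1) * (k + m).choose n) := by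
              rw [ih]; ring
          _ = _ := by rw [add_one_mul_choose_eq]; ring

/-- The hypergeometric variance `Var X = n (k / N) (m / N) (N - n) / (N - 1)`, `N = k + m`,
with denominators cleared. -/
theorem sum_range_choose_mul_choose_mul_sq (k m n : ℕ) :
    ((k + m : ℕ) - 1 : ℝ) * ∑ i ∈ range (n + 1),
        ((k.choose i * m.choose (n - i) : ℕ) : ℝ) * ((k + m : ℕ) * i - n * k : ℝ) ^ 2 =
      n * k * m * ((k + m : ℕ) - n : ℝ) * ((k + m).choose n : ℕ) := by
  have h0 := congrArg (Nat.cast : ℕ → ℝ) (sum_range_choose_mul_choose k m n)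
  have h1 := congrArg (Nat.cast : ℕ → ℝ) (sum_range_descFactorial_mul_choose_mul_choose 1 k m n)
  have h2 := congrArg (Nat.cast : ℕ → ℝ) (sum_range_descFactorial_mul_choose_mul_choose 2 k m n)
  simp only [descFactorial_one, cast_mul, cast_sum, cast_descFactorial_two] at h0 h1 h2
  have hsq (N : ℝ) : ∑ i ∈ range (n + 1),
      ((k.choose i * m.choose (n - i) : ℕ) : ℝ) * (N * i - n * k) ^ 2 =
        N ^ 2 * ∑ i ∈ range (n + 1), (i * (i - 1) : ℝ) * (k.choose i * m.choose (n - i)) +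
        (N ^ 2 - 2 * N * n * k) * ∑ i ∈ range (n + 1), (i : ℝ) * (k.choose i * m.choose (n - i)) +
        (n * k) ^ 2 * ∑ i ∈ range (n + 1), ((k.choose i : ℝ) * m.choose (n - i)) := by
    simp only [mul_sum, ← sum_add_distrib]
    exact sum_congr rfl fun i _ => by push_cast; ring
  rw [hsq]
  push_cast at h1 h2 ⊢
  linear_combination (k + m : ℝ) * h2 + (k + m - 1 : ℝ) * (k + m - 2 * n * k : ℝ) * h1 +
    (k + m - 1 : ℝ) * (n * k) ^ 2 * h0

end Nat

/-- `P(X = i)` for `X` hypergeometric: `n` draws from `2 * n` items of which `k` are marked. -/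
noncomputable def hypergeomHalf (n k i : ℕ) : ℝ :=
  ((k.choose i * (2 * n - k).choose (n - i) : ℕ) : ℝ) / (((2 * n).choose n : ℕ) : ℝ)

section hypergeomHalf

variable {n k : ℕ}

theorem hypergeomHalf_nonneg (i : ℕ) : 0 ≤ hypergeomHalf n k i := by
  unfold hypergeomHalf; positivity

theorem sum_hypergeomHalf (hk : k ≤ 2 * n) : ∑ i ∈ range (n + 1), hypergeomHalf n k i = 1 := by
  have hW : (((2 * n).choose n : ℕ) : ℝ) ≠ 0 := by exact_mod_cast (Nat.choose_pos (by omega)).ne'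
  simp only [hypergeomHalf]
  rw [← sum_div, div_eq_one_iff_eq hW, ← Nat.cast_sum, Nat.sum_range_choose_mul_choose,
    Nat.add_sub_cancel' hk]

theorem sum_hypergeomHalf_mul_div (hk : k ≤ 2 * n) :
    ∑ i ∈ range (n + 1), hypergeomHalf n k i * (i / n) = k / (2 * n) := by
  rcases n.eq_zero_or_pos with rfl | hn
  · simp
  have h1 := congrArg (Nat.cast : ℕ → ℝ)
    (Nat.sum_range_descFactorial_mul_choose_mul_choose 1 k (2 * n - k) n)
  rw [Nat.add_sub_cancel' hk] at h1
  simp only [Nat.descFactorial_one, Nat.cast_mul, Nat.cast_sum] at h1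
  have hW : (0 : ℝ) < ((2 * n).choose n : ℕ) := by exact_mod_cast Nat.choose_pos (by omega)
  calc ∑ i ∈ range (n + 1), hypergeomHalf n k i * (i / n)
      = (∑ i ∈ range (n + 1), (i : ℝ) * ((k.choose i : ℕ) * ((2 * n - k).choose (n - i) : ℕ))) /
          (n * ((2 * n).choose n : ℕ)) := by
        rw [sum_div]
        refine sum_congr rfl fun i _ => ?_
        unfold hypergeomHalf; push_cast; field_simp
    _ = k / (2 * n) := by
        rw [div_eq_div_iff (by positivity) (by positivity)]
        push_cast at h1 ⊢
        linear_combination h1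

theorem sum_hypergeomHalf_mul_sq (hn : 1 ≤ n) (hk : k ≤ 2 * n) :
    ∑ i ∈ range (n + 1), hypergeomHalf n k i * ((i : ℝ) / n - k / (2 * n)) ^ 2 =
      (k : ℝ) * (2 * n - k) / (4 * n ^ 2 * (2 * n - 1)) := by
  have hvar := Nat.sum_range_choose_mul_choose_mul_sq k (2 * n - k) n
  rw [Nat.add_sub_cancel' hk] at hvar
  push_cast [Nat.cast_sub hk] at hvar
  have hW : (0 : ℝ) < ((2 * n).choose n : ℕ) := by exact_mod_cast Nat.choose_pos (by omega)
  have hn' : (1 : ℝ) ≤ n := by exact_mod_cast hn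
  calc ∑ i ∈ range (n + 1), hypergeomHalf n k i * ((i : ℝ) / n - k / (2 * n)) ^ 2
      = (∑ i ∈ range (n + 1), ((k.choose i : ℕ) * ((2 * n - k).choose (n - i) : ℕ) : ℝ) *
          ((2 * n : ℝ) * i - n * k) ^ 2) / (4 * (n : ℝ) ^ 4 * ((2 * n).choose n : ℕ)) := by
        rw [sum_div]
        refine sum_congr rfl fun i _ => ?_
        unfold hypergeomHalf; push_cast; field_simp; ring
    _ = k * (2 * n - k) / (4 * n ^ 2 * (2 * n - 1)) := by
        rw [div_eq_div_iff (by positivity) (by nlinarith)]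
        linear_combination 4 * (n : ℝ) ^ 2 * hvar

theorem sum_hypergeomHalf_mul_sq_le (hn : 1 ≤ n) (hk : k ≤ 2 * n) :
    ∑ i ∈ range (n + 1), hypergeomHalf n k i * ((i : ℝ) / n - k / (2 * n)) ^ 2 ≤
      1 / (4 * (n : ℝ)) := by
  have hn' : (1 : ℝ) ≤ n := by exact_mod_cast hn
  rw [sum_hypergeomHalf_mul_sq hn hk, div_le_div_iff₀ (by nlinarith) (by positivity)]
  nlinarith [sq_nonneg ((k : ℝ) - n)]

end hypergeomHalf

theorem convexOn_add_half_mul_sq {s : Set ℝ} (hs : Convex ℝ s) {f : ℝ → ℝ} (hf : ContDiff ℝ 2 f)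
    {C : ℝ} (hC : ∀ x ∈ interior s, -C ≤ deriv (deriv f) x) :
    ConvexOn ℝ s fun x => f x + C / 2 * x ^ 2 := by
  have hf1 : Differentiable ℝ f := hf.differentiable (by norm_num)
  have hf2 : Differentiable ℝ (deriv f) := hf.differentiable_deriv_two
  have hsq (x : ℝ) : HasDerivAt (fun y => C / 2 * y ^ 2) (C * x) x :=
    ((hasDerivAt_pow 2 x).const_mul (C / 2)).congr_deriv (by push_cast; ring)
  refine convexOn_of_hasDerivWithinAt2_nonneg hs (f' := fun x => deriv f x + C * x)
    (f'' := fun x => deriv (deriv f) x + C) (hf1.continuous.add (by fun_prop)).continuousOn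
    (fun x _ => ((hf1 x).hasDerivAt.add (hsq x)).hasDerivWithinAt)
    (fun x _ => ((hf2 x).hasDerivAt.add ((hasDerivAt_id x).const_mul C)).hasDerivWithinAt
      |>.congr_deriv (by simp)) fun x hx => by linarith [hC x hx]

theorem map_sum_le_add_variance_of_convexOn_add_sq {ι : Type*} {t : Finset ι} {s : Set ℝ}
    {f : ℝ → ℝ} {C : ℝ} (hconv : ConvexOn ℝ s fun x => f x + C / 2 * x ^ 2) {p x : ι → ℝ}
    (hp₀ : ∀ i ∈ t, 0 ≤ p i) (hp₁ : ∑ i ∈ t, p i = 1) (hx : ∀ i ∈ t, x i ∈ s) :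
    f (∑ i ∈ t, p i * x i) ≤
      ∑ i ∈ t, p i * f (x i) + C / 2 * ∑ i ∈ t, p i * (x i - ∑ j ∈ t, p j * x j) ^ 2 := by
  have hjensen := hconv.map_sum_le hp₀ hp₁ hx
  simp only [smul_eq_mul] at hjensen
  set μ := ∑ j ∈ t, p j * x j
  have hvar : ∑ i ∈ t, p i * (x i - μ) ^ 2 = ∑ i ∈ t, p i * x i ^ 2 - μ ^ 2 := by
    have hexpand : ∀ i ∈ t,
        p i * (x i - μ) ^ 2 = p i * x i ^ 2 - 2 * μ * (p i * x i) + μ ^ 2 * p i :=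
      fun i _ => by ring
    rw [sum_congr rfl hexpand, sum_add_distrib, sum_sub_distrib, ← mul_sum, ← mul_sum, hp₁]
    ring
  have hsplit : ∑ i ∈ t, p i * (f (x i) + C / 2 * x i ^ 2) =
      ∑ i ∈ t, p i * f (x i) + C / 2 * ∑ i ∈ t, p i * x i ^ 2 := by
    rw [mul_sum, ← sum_add_distrib]
    exact sum_congr rfl fun i _ => by ring
  rw [hvar]
  linarith

theorem upper_coefficient_inequality (f : ℝ → ℝ) (hf : ContDiff ℝ 2 f)
    (C : ℝ) (hC : ∀ x ∈ Set.Icc (0:ℝ) 1, |deriv (deriv f) x| ≤ C)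
    (n k : ℕ) (hn : 1 ≤ n) (hk : k ≤ 2 * n)
    (b : ℕ → ℕ → ℝ)
    (hb : ∀ m j, b m j = f ((j : ℝ) / (m : ℝ)) + C / (2 * (m : ℝ))) :
    b (2 * n) k ≤ ∑ i ∈ Finset.range (n + 1),
      ((k.choose i * (2 * n - k).choose (n - i) : ℕ) : ℝ)
        / (((2 * n).choose n : ℕ) : ℝ) * b n i := by
  have hC₀ : 0 ≤ C := (abs_nonneg _).trans (hC 0 ⟨le_rfl, zero_le_one⟩)
  have hn₀ : (0 : ℝ) < n := by exact_mod_cast hn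
  have hmem : ∀ i ∈ range (n + 1), (i : ℝ) / n ∈ Set.Icc (0 : ℝ) 1 := fun i hi =>
    ⟨by positivity, div_le_one_of_le₀ (by exact_mod_cast Nat.lt_succ_iff.mp (mem_range.mp hi))
      hn₀.le⟩
  have hconv := convexOn_add_half_mul_sq (convex_Icc 0 1) hf fun x hx =>
    neg_le_of_abs_le (hC x (interior_subset hx))
  have hjensen := map_sum_le_add_variance_of_convexOn_add_sq hconv
    (fun i _ => hypergeomHalf_nonneg i) (sum_hypergeomHalf hk) hmem
  rw [sum_hypergeomHalf_mul_div hk] at hjensen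
  have hvar := mul_le_mul_of_nonneg_left (sum_hypergeomHalf_mul_sq_le hn hk)
    (by positivity : (0 : ℝ) ≤ C / 2)
  change _ ≤ ∑ i ∈ range (n + 1), hypergeomHalf n k i * b n i
  simp only [hb, mul_add, sum_add_distrib, ← sum_mul, sum_hypergeomHalf hk]
  push_cast
  have hslack : C / 2 * (1 / (4 * n)) + C / (2 * (2 * n)) ≤ 1 * (C / (2 * n)) := by
    field_simp
    linarith
  linarith
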